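/- If f is a holomorphic modular form of weight k on SL(2,ℤ) with D(f) = 0, where D = θ - (k/12)E₂ is the Serre derivation (θ = q d/dq), then f is a scalar multiple of η(τ)^{2k}, and necessarily such nonzero f exist only for k ≥ 0 with the property that η^{2k} is holomorphic of weight k. -/

import Mathlib

/-! Logarithmic differentiation of the product for `η` gives `η'/η = (πi/12) E₂`, so
`g = η^{2k}` satisfies `g' = 2πi (k/12) E₂ g`: the same first-order linear equation that
`D f = 0` imposes on `f`. Since `η` has no zeros on the upper half-plane, `f / g` has vanishing
derivative on this connected open set and is therefore constant. -/

open Complex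

noncomputable section

/-- The Dedekind eta function `η(z) = q^{1/24} ∏_{n≥1} (1 - qⁿ)`, `q = e^{2πiz}`. -/
def dedekindEta (z : ℂ) : ℂ :=
  Complex.exp (Real.pi * I * z / 12) *
    ∏' n : ℕ, (1 - Complex.exp (2 * Real.pi * I * (n + 1) * z))

/-- The quasimodular Eisenstein series `E₂(z) = 1 - 24 Σ_{n≥1} σ₁(n) qⁿ`. -/
def E₂ (z : ℂ) : ℂ :=
  1 - 24 * ∑' n : ℕ, ((ArithmeticFunction.sigma 1) (n + 1) : ℂ) *
    Complex.exp (2 * Real.pi * I * (n + 1) * z)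

/-- `f` is a holomorphic modular form of weight `k` on `SL(2,ℤ)`, realized as a function
on the upper half-plane `{z : 0 < im z}`: holomorphic, weight-`k` invariant, and bounded
as `im z → ∞`. -/
def IsModularFormWt (k : ℕ) (f : ℂ → ℂ) : Prop :=
  DifferentiableOn ℂ f {z : ℂ | 0 < z.im} ∧
  (∀ γ : Matrix.SpecialLinearGroup (Fin 2) ℤ, ∀ z : ℂ, 0 < z.im →
    f ((((γ : Matrix (Fin 2) (Fin 2) ℤ) 0 0 : ℂ) * z + ((γ : Matrix (Fin 2) (Fin 2) ℤ) 0 1 : ℂ)) /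
        (((γ : Matrix (Fin 2) (Fin 2) ℤ) 1 0 : ℂ) * z + ((γ : Matrix (Fin 2) (Fin 2) ℤ) 1 1 : ℂ)))
      = (((γ : Matrix (Fin 2) (Fin 2) ℤ) 1 0 : ℂ) * z
          + ((γ : Matrix (Fin 2) (Fin 2) ℤ) 1 1 : ℂ)) ^ k * f z) ∧
  (∃ C A : ℝ, ∀ z : ℂ, A < z.im → ‖f z‖ ≤ C)

open UpperHalfPlane (upperHalfPlaneSet)
open scoped UpperHalfPlane

theorem IsOpen.exists_eq_const_mul_of_deriv_eq_logDeriv_mul {𝕜 : Type*} [RCLike 𝕜]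
    {U : Set 𝕜} (hUo : IsOpen U) (hU : IsPreconnected U) {f g : 𝕜 → 𝕜}
    (hf : DifferentiableOn 𝕜 f U) (hg : DifferentiableOn 𝕜 g U) (hg0 : ∀ z ∈ U, g z ≠ 0)
    (hfg : ∀ z ∈ U, deriv f z = logDeriv g z * f z) :
    ∃ c, ∀ z ∈ U, f z = c * g z := by
  have hquot : Set.EqOn (deriv (fun z ↦ f z / g z)) 0 U := fun z hz ↦ by
    have hgz := hg0 z hz
    rw [deriv_fun_div (hf.differentiableAt (hUo.mem_nhds hz))
      (hg.differentiableAt (hUo.mem_nhds hz)) hgz, hfg z hz, logDeriv_apply, Pi.zero_apply]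
    field_simp
    ring
  obtain ⟨c, hc⟩ := hUo.exists_is_const_of_deriv_eq_zero hU (hf.div hg hg0) hquot
  exact ⟨c, fun z hz ↦ by rw [← hc z hz, Pi.div_apply, div_mul_cancel₀ _ (hg0 z hz)]⟩

theorem dedekindEta_eq_eta : dedekindEta = ModularForm.eta := by
  ext z
  simp only [dedekindEta, ModularForm.eta, ModularForm.eta_q_eq_cexp, Function.Periodic.qParam]
  congr 2
  push_cast
  ring

theorem E₂_eq_E2 (z : ℍ) : E₂ z = EisensteinSeries.E2 z := by
  rw [EisensteinSeries.E2_eq_tsum_cexp, tsum_pnat_eq_tsum_succ (f := fun n ↦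
    ((ArithmeticFunction.sigma 1 n : ℕ) : ℂ) * Complex.exp (2 * Real.pi * I * z) ^ n), E₂]
  congr 2
  refine tsum_congr fun n ↦ ?_
  rw [← ModularForm.eta_q_eq_cexp, ModularForm.eta_q_eq_pow]

theorem dedekindEta_ne_zero {z : ℂ} (hz : 0 < z.im) : dedekindEta z ≠ 0 :=
  dedekindEta_eq_eta ▸ ModularForm.eta_ne_zero hz

theorem differentiableAt_dedekindEta {z : ℂ} (hz : 0 < z.im) :
    DifferentiableAt ℂ dedekindEta z :=
  dedekindEta_eq_eta ▸ ModularForm.differentiableAt_eta_of_mem_upperHalfPlaneSet hz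

theorem logDeriv_dedekindEta_pow {z : ℂ} (hz : 0 < z.im) (n : ℕ) :
    logDeriv (dedekindEta · ^ n) z = n * (Real.pi * I / 12) * E₂ z := by
  rw [logDeriv_fun_pow (differentiableAt_dedekindEta hz), dedekindEta_eq_eta,
    show z = ((⟨z, hz⟩ : ℍ) : ℂ) from rfl, ModularForm.logDeriv_eta_eq_E2, E₂_eq_E2, mul_assoc]

/-- If `f` is a holomorphic modular form of weight `k` on `SL(2,ℤ)` annihilated by the
Serre derivation `D = θ - (k/12)E₂` (with `θ = q d/dq = (2πi)⁻¹ d/dz`), then `f` is a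
scalar multiple of `η^{2k}`. -/
theorem serre_derivation_kernel_is_eta_power (k : ℕ) (f : ℂ → ℂ)
    (hf : IsModularFormWt k f)
    (hD : ∀ z : ℂ, 0 < z.im →
      (2 * Real.pi * I)⁻¹ * deriv f z - ((k : ℂ) / 12) * E₂ z * f z = 0) :
    ∃ c : ℂ, ∀ z : ℂ, 0 < z.im → f z = c * (dedekindEta z) ^ (2 * k) := by
  have hf' : ∀ z ∈ upperHalfPlaneSet, deriv f z = logDeriv (dedekindEta · ^ (2 * k)) z * f z := by
    intro z hz
    have h2πI : (2 * Real.pi * I : ℂ) ≠ 0 := by simp [Real.pi_ne_zero]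
    have hDz := hD z hz
    rw [logDeriv_dedekindEta_pow hz]
    field_simp at hDz
    push_cast
    linear_combination hDz / 12
  exact UpperHalfPlane.isOpen_upperHalfPlaneSet.exists_eq_const_mul_of_deriv_eq_logDeriv_mul
    (convex_halfSpace_im_gt 0).isPreconnected hf.1
    (fun z hz ↦ ((differentiableAt_dedekindEta hz).pow _).differentiableWithinAt)
    (fun z hz ↦ pow_ne_zero _ (dedekindEta_ne_zero hz)) hf'

end
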